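/- For the C^∞ function f : ℝ² → ℝ, f(x,y) = x² + y², there is no vector L ∈ ℝ² such that q_{(f,a,b,c)} tends to L as the non-collinear triples (a,b,c) tend to ((0,0),(0,0),(0,0)); concretely, there exist two sequences of non-collinear triples (aₙ,bₙ,cₙ), both converging to ((0,0),(0,0),(0,0)), along one of which q_{(f,aₙ,bₙ,cₙ)} converges to (0,0) and along the other of which it converges to (0,1). -/

import Mathlib

open scoped RealInnerProductSpace Topology

noncomputable section

/-- The Euclidean plane `ℝ²` with the standard inner product. -/
abbrev E2 := EuclideanSpace ℝ (Fin 2)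

/-- Signed area `τ` of the (oriented) triangle with vertices `a`, `b`, `c`. -/
def tau (a b c : E2) : ℝ :=
  ((b - a) 0 * (c - a) 1 - (b - a) 1 * (c - a) 0) / 2

/-- The vector `w = (f(b)−f(a))·(c−a) − (f(c)−f(a))·(b−a)`. -/
def wvec (f : E2 → ℝ) (a b c : E2) : E2 :=
  (f b - f a) • (c - a) - (f c - f a) • (b - a)

/-- The difference vector quotient `q_{(f,a,b,c)} = (1/(2τ)) • (w₂, −w₁)`. -/
def qvec (f : E2 → ℝ) (a b c : E2) : E2 :=
  (1 / (2 * tau a b c)) • (WithLp.toLp 2 (![(wvec f a b c) 1, -((wvec f a b c) 0)] : Fin 2 → ℝ) : E2)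

end

open Filter

private lemma tau1 (s : ℝ) : tau 0 (WithLp.toLp 2 (![s,0] : Fin 2 → ℝ) : E2) (WithLp.toLp 2 (![0,s] : Fin 2 → ℝ) : E2) = s^2/2 := by
  simp [tau]; ring

private lemma tau2 (s : ℝ) : tau 0 (WithLp.toLp 2 (![s^3,0] : Fin 2 → ℝ) : E2) (WithLp.toLp 2 (![s,s^2] : Fin 2 → ℝ) : E2) = s^5/2 := by
  simp [tau]; ring

private lemma q1 (f : E2 → ℝ) (hf : ∀ v : E2, f v = (v 0) ^ 2 + (v 1) ^ 2)
    (s : ℝ) (hs : s ≠ 0) : qvec f 0 (WithLp.toLp 2 (![s,0] : Fin 2 → ℝ) : E2) (WithLp.toLp 2 (![0,s] : Fin 2 → ℝ) : E2) = s • (WithLp.toLp 2 (![1,1] : Fin 2 → ℝ) : E2) := by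
  ext i
  fin_cases i <;>
  · simp [qvec, wvec, tau, hf, PiLp.smul_apply, PiLp.sub_apply, smul_eq_mul]
    field_simp

private lemma q2 (f : E2 → ℝ) (hf : ∀ v : E2, f v = (v 0) ^ 2 + (v 1) ^ 2)
    (s : ℝ) (hs : s ≠ 0) :
    qvec f 0 (WithLp.toLp 2 (![s^3,0] : Fin 2 → ℝ) : E2) (WithLp.toLp 2 (![s,s^2] : Fin 2 → ℝ) : E2) = (WithLp.toLp 2 (![0,1] : Fin 2 → ℝ) : E2) + s^3 • (WithLp.toLp 2 (![1,0] : Fin 2 → ℝ) : E2) := by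
  ext i
  fin_cases i
  · simp [qvec, wvec, tau, hf, PiLp.smul_apply, PiLp.sub_apply, PiLp.add_apply,
      smul_eq_mul]
    field_simp
  · simp [qvec, wvec, tau, hf, PiLp.smul_apply, PiLp.sub_apply, PiLp.add_apply,
      smul_eq_mul]
    field_simp
    ring

private lemma vec_eq (x y : ℝ) : (WithLp.toLp 2 (![x, y] : Fin 2 → ℝ) : E2) = x • (WithLp.toLp 2 (![1,0] : Fin 2 → ℝ) : E2) + y • (WithLp.toLp 2 (![0,1] : Fin 2 → ℝ) : E2) := by
  ext i
  fin_cases i <;> simp [PiLp.smul_apply, PiLp.add_apply, smul_eq_mul]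

/-- for the `C^∞` function `f(x,y) = x² + y²`, the difference vector
quotient `q_{(f,a,b,c)}` has no limit as the non-collinear triples `(a,b,c)` tend
to `((0,0),(0,0),(0,0))`; concretely, there are two sequences of non-collinear
triples, both converging to the origin, along which `q` converges to `(0,0)`
and to `(0,1)` respectively. -/
theorem stmt2 (f : E2 → ℝ) (hf : ∀ v : E2, f v = (v 0) ^ 2 + (v 1) ^ 2) :
    (¬ ∃ L : E2, Tendsto (fun t : E2 × E2 × E2 => qvec f t.1 t.2.1 t.2.2)
        (𝓝[{t : E2 × E2 × E2 | tau t.1 t.2.1 t.2.2 ≠ 0}] (0, 0, 0)) (𝓝 L)) ∧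
    ∃ A B C A' B' C' : ℕ → E2,
      (∀ n, tau (A n) (B n) (C n) ≠ 0) ∧
      (∀ n, tau (A' n) (B' n) (C' n) ≠ 0) ∧
      Tendsto A atTop (𝓝 (0 : E2)) ∧ Tendsto B atTop (𝓝 (0 : E2)) ∧
      Tendsto C atTop (𝓝 (0 : E2)) ∧ Tendsto A' atTop (𝓝 (0 : E2)) ∧
      Tendsto B' atTop (𝓝 (0 : E2)) ∧ Tendsto C' atTop (𝓝 (0 : E2)) ∧
      Tendsto (fun n => qvec f (A n) (B n) (C n)) atTop (𝓝 (0 : E2)) ∧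
      Tendsto (fun n => qvec f (A' n) (B' n) (C' n)) atTop (𝓝 (WithLp.toLp 2 (![0, 1] : Fin 2 → ℝ) : E2)) := by
  set s : ℕ → ℝ := fun n => 1 / (n + 1) with hs_def
  have hsne : ∀ n, s n ≠ 0 := by
    intro n
    positivity
  have hs0 : Tendsto s atTop (𝓝 0) := tendsto_one_div_add_atTop_nhds_zero_nat
  -- the sequences
  set A : ℕ → E2 := fun _ => 0 with hA
  set B : ℕ → E2 := fun n => (WithLp.toLp 2 (![s n, 0] : Fin 2 → ℝ) : E2) with hB
  set C : ℕ → E2 := fun n => (WithLp.toLp 2 (![0, s n] : Fin 2 → ℝ) : E2) with hC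
  set A' : ℕ → E2 := fun _ => 0 with hA'
  set B' : ℕ → E2 := fun n => (WithLp.toLp 2 (![(s n)^3, 0] : Fin 2 → ℝ) : E2) with hB'
  set C' : ℕ → E2 := fun n => (WithLp.toLp 2 (![s n, (s n)^2] : Fin 2 → ℝ) : E2) with hC'
  have htau1 : ∀ n, tau (A n) (B n) (C n) ≠ 0 := by
    intro n; rw [hA, hB, hC, tau1]
    have := hsne n; positivity
  have htau2 : ∀ n, tau (A' n) (B' n) (C' n) ≠ 0 := by
    intro n; rw [hA', hB', hC', tau2]
    have := hsne n; positivity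
  have hq1 : ∀ n, qvec f (A n) (B n) (C n) = s n • (WithLp.toLp 2 (![1,1] : Fin 2 → ℝ) : E2) :=
    fun n => q1 f hf (s n) (hsne n)
  have hq2 : ∀ n, qvec f (A' n) (B' n) (C' n) = (WithLp.toLp 2 (![0,1] : Fin 2 → ℝ) : E2) + (s n)^3 • (WithLp.toLp 2 (![1,0] : Fin 2 → ℝ) : E2) :=
    fun n => q2 f hf (s n) (hsne n)
  -- coordinatewise tendsto helper
  have hten : ∀ (x y : ℕ → ℝ), Tendsto x atTop (𝓝 0) → Tendsto y atTop (𝓝 0) →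
      Tendsto (fun n => (WithLp.toLp 2 (![x n, y n] : Fin 2 → ℝ) : E2)) atTop (𝓝 0) := by
    intro x y hx hy
    have heq : (fun n => (WithLp.toLp 2 (![x n, y n] : Fin 2 → ℝ) : E2)) =
        fun n => x n • (WithLp.toLp 2 (![1,0] : Fin 2 → ℝ) : E2) + y n • (WithLp.toLp 2 (![0,1] : Fin 2 → ℝ) : E2) :=
      funext fun n => vec_eq _ _
    have h0 : ((0:ℝ) • (WithLp.toLp 2 (![1,0] : Fin 2 → ℝ) : E2) + (0:ℝ) • (WithLp.toLp 2 (![0,1] : Fin 2 → ℝ) : E2)) = 0 := by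
      rw [zero_smul, zero_smul, add_zero]
    rw [heq, ← h0]
    exact (hx.smul_const _).add (hy.smul_const _)
  have hs3 : Tendsto (fun n => (s n)^3) atTop (𝓝 0) := by
    simpa using hs0.pow 3
  have hs2 : Tendsto (fun n => (s n)^2) atTop (𝓝 0) := by
    simpa using hs0.pow 2
  have htA : Tendsto A atTop (𝓝 (0 : E2)) := tendsto_const_nhds
  have htB : Tendsto B atTop (𝓝 (0 : E2)) := hten _ _ hs0 tendsto_const_nhds
  have htC : Tendsto C atTop (𝓝 (0 : E2)) := hten _ _ tendsto_const_nhds hs0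
  have htA' : Tendsto A' atTop (𝓝 (0 : E2)) := tendsto_const_nhds
  have htB' : Tendsto B' atTop (𝓝 (0 : E2)) := hten _ _ hs3 tendsto_const_nhds
  have htC' : Tendsto C' atTop (𝓝 (0 : E2)) := hten _ _ hs0 hs2
  have htq1 : Tendsto (fun n => qvec f (A n) (B n) (C n)) atTop (𝓝 (0 : E2)) := by
    have h : ((0:ℝ) • (WithLp.toLp 2 (![1,1] : Fin 2 → ℝ) : E2)) = 0 := zero_smul _ _
    rw [funext hq1, ← h]
    exact hs0.smul_const _
  have htq2 : Tendsto (fun n => qvec f (A' n) (B' n) (C' n)) atTop (𝓝 (WithLp.toLp 2 (![0,1] : Fin 2 → ℝ) : E2)) := by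
    rw [funext hq2]
    have : Tendsto (fun n => (WithLp.toLp 2 (![0,1] : Fin 2 → ℝ) : E2) + (s n)^3 • (WithLp.toLp 2 (![1,0] : Fin 2 → ℝ) : E2)) atTop
        (𝓝 ((WithLp.toLp 2 (![0,1] : Fin 2 → ℝ) : E2) + (0:ℝ) • (WithLp.toLp 2 (![1,0] : Fin 2 → ℝ) : E2))) :=
      tendsto_const_nhds.add (hs3.smul_const _)
    rwa [zero_smul, add_zero] at this
  refine ⟨?_, A, B, C, A', B', C', htau1, htau2, htA, htB, htC, htA', htB', htC', htq1, htq2⟩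
  rintro ⟨L, hL⟩
  have hseq1 : Tendsto (fun n => ((A n, B n, C n) : E2 × E2 × E2)) atTop
      (𝓝[{t : E2 × E2 × E2 | tau t.1 t.2.1 t.2.2 ≠ 0}] (0, 0, 0)) := by
    apply tendsto_nhdsWithin_of_tendsto_nhds_of_eventually_within
    · have := htA.prodMk (htB.prodMk htC)
      rwa [← nhds_prod_eq, ← nhds_prod_eq] at this
    · exact Eventually.of_forall fun n => htau1 n
  have hseq2 : Tendsto (fun n => ((A' n, B' n, C' n) : E2 × E2 × E2)) atTop
      (𝓝[{t : E2 × E2 × E2 | tau t.1 t.2.1 t.2.2 ≠ 0}] (0, 0, 0)) := by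
    apply tendsto_nhdsWithin_of_tendsto_nhds_of_eventually_within
    · have := htA'.prodMk (htB'.prodMk htC')
      rwa [← nhds_prod_eq, ← nhds_prod_eq] at this
    · exact Eventually.of_forall fun n => htau2 n
  have h1 : L = (0 : E2) := tendsto_nhds_unique (hL.comp hseq1) htq1
  have h2 : L = (WithLp.toLp 2 (![0,1] : Fin 2 → ℝ) : E2) := tendsto_nhds_unique (hL.comp hseq2) htq2
  have : (0 : E2) = (WithLp.toLp 2 (![0,1] : Fin 2 → ℝ) : E2) := h1 ▸ h2
  have := congrArg (fun v : E2 => v 1) this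
  simp at this
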